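/- arXiv:2511.23333 — 2 statements merged into one kernel-verified Lean document; each statement's English description precedes it below -/
import Mathlib

section
/- For any compactly supported smooth function g: ℝⁿ → ℝ and the quadratic potential Φ(u) = (1/2)∑_k c_k u_k² with c_k = a_k|λ_k| ≥ 0, one has ∫ |∇Φ|² |∇g|² dμ ≤ 2(∑_k c_k) ∫ |∇g|² dμ + 4 ∫ ‖∇²g‖_F² dμ, where μ is the Gaussian measure with density proportional to exp(-Φ) and ‖·‖_F denotes the Frobenius norm. -/
open MeasureTheory Real ProbabilityTheory

noncomputable def Phi {n : ℕ} (c : Fin n → ℝ) (u : Fin n → ℝ) : ℝ :=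
  (1/2) * ∑ k, c k * u k ^ 2

noncomputable def gaussMeasure {n : ℕ} (c : Fin n → ℝ) : Measure (Fin n → ℝ) :=
  (∫⁻ u, ENNReal.ofReal (Real.exp (-Phi c u)))⁻¹ •
    (volume.withDensity fun u => ENNReal.ofReal (Real.exp (-Phi c u)))

section Aux

variable {n : ℕ} (c : Fin n → ℝ)


lemma contDiff_Phi : ContDiff ℝ (⊤ : ℕ∞) (Phi c) := by
  unfold Phi
  exact contDiff_const.mul (ContDiff.sum fun k _ =>
    contDiff_const.mul ((ContinuousLinearMap.proj (R := ℝ) (φ := fun _ : Fin n => ℝ) k).contDiff.pow 2))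

lemma hasFDerivAt_Phi (u : Fin n → ℝ) :
    HasFDerivAt (Phi c)
      ((1/2 : ℝ) • ∑ k, (c k) • ((u k) • (ContinuousLinearMap.proj (R := ℝ) (φ := fun _ : Fin n => ℝ) k)
        + (u k) • (ContinuousLinearMap.proj (R := ℝ) (φ := fun _ : Fin n => ℝ) k))) u := by
  have h : ∀ k : Fin n, HasFDerivAt (fun u : Fin n → ℝ => c k * u k ^ 2)
      ((c k) • ((u k) • (ContinuousLinearMap.proj (R := ℝ) (φ := fun _ : Fin n => ℝ) k)
        + (u k) • (ContinuousLinearMap.proj (R := ℝ) (φ := fun _ : Fin n => ℝ) k))) u := by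
    intro k
    have hk := (ContinuousLinearMap.proj (R := ℝ) (φ := fun _ : Fin n => ℝ) k).hasFDerivAt (x := u)
    have h2 := (hk.mul hk).const_mul (c k)
    simpa [pow_two] using h2
  have h3 := (HasFDerivAt.sum (fun k (_ : k ∈ Finset.univ) => h k)).const_mul (1/2 : ℝ)
  unfold Phi
  simpa using h3

lemma fderiv_Phi_apply (u : Fin n → ℝ) (j : Fin n) :
    fderiv ℝ (Phi c) u (Pi.single j 1) = c j * u j := by
  rw [(hasFDerivAt_Phi c u).fderiv]
  simp only [ContinuousLinearMap.coe_smul', ContinuousLinearMap.coe_sum', Pi.smul_apply,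
    Finset.sum_apply, ContinuousLinearMap.add_apply, ContinuousLinearMap.smul_apply,
    ContinuousLinearMap.proj_apply, Pi.single_apply, smul_eq_mul]
  have h4 : ∀ x : Fin n,
      c x * ((u x * if x = j then (1:ℝ) else 0) + u x * if x = j then (1:ℝ) else 0) =
      if x = j then c x * u x * 2 else 0 := by
    intro x; by_cases h : x = j <;> simp [h] <;> ring
  rw [Finset.sum_congr rfl fun x _ => h4 x, Finset.sum_ite_eq' Finset.univ j]
  simp; ring

noncomputable def rho (u : Fin n → ℝ) : ℝ := Real.exp (-Phi c u)

lemma rho_pos (u : Fin n → ℝ) : 0 < rho c u := Real.exp_pos _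
lemma contDiff_rho : ContDiff ℝ (⊤ : ℕ∞) (rho c) := Real.contDiff_exp.comp (contDiff_Phi c).neg
lemma fderiv_rho_apply (u : Fin n → ℝ) (j : Fin n) :
    fderiv ℝ (rho c) u (Pi.single j 1) = -(c j * u j) * rho c u := by
  have hphi : HasFDerivAt (Phi c) (fderiv ℝ (Phi c) u) u :=
    ((contDiff_Phi c).differentiable (by simp) u).hasFDerivAt
  have h : HasFDerivAt (rho c) (Real.exp (-Phi c u) • (-fderiv ℝ (Phi c) u)) u := hphi.neg.exp
  rw [h.fderiv]
  simp [fderiv_Phi_apply, rho]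
  ring

variable {g : (Fin n → ℝ) → ℝ}

lemma contDiff_Dg (hg : ContDiff ℝ (⊤ : ℕ∞) g) (i : Fin n) : ContDiff ℝ (⊤ : ℕ∞) (fun u => fderiv ℝ g u (Pi.single i 1)) :=
  (hg.fderiv_right (by simp)).clm_apply contDiff_const

lemma hsupp_Dg (hsupp : HasCompactSupport g) (i : Fin n) : HasCompactSupport (fun u => fderiv ℝ g u (Pi.single i 1)) :=
  hsupp.fderiv_apply (𝕜 := ℝ) (Pi.single i 1)

lemma tsupp_Dg (i : Fin n) :
    tsupport (fun u => fderiv ℝ g u (Pi.single i 1)) ⊆ tsupport g := by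
  apply closure_minimal _ (isClosed_tsupport g)
  intro u hu
  by_contra h
  have h0 : fderiv ℝ g u = 0 := fderiv_of_notMem_tsupport (𝕜 := ℝ) h
  simp [Function.mem_support, h0] at hu

lemma hasFDerivAt_B (hg : ContDiff ℝ (⊤ : ℕ∞) g) (u : Fin n → ℝ) :
    HasFDerivAt (fun u => ∑ i, (fderiv ℝ g u (Pi.single i 1)) ^ 2)
      (∑ i, ((fderiv ℝ g u (Pi.single i 1)) •
          fderiv ℝ (fun v => fderiv ℝ g v (Pi.single i 1)) u
        + (fderiv ℝ g u (Pi.single i 1)) •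
          fderiv ℝ (fun v => fderiv ℝ g v (Pi.single i 1)) u)) u := by
  have h : ∀ i : Fin n, HasFDerivAt (fun u => (fderiv ℝ g u (Pi.single i 1)) ^ 2)
      ((fderiv ℝ g u (Pi.single i 1)) • fderiv ℝ (fun v => fderiv ℝ g v (Pi.single i 1)) u
        + (fderiv ℝ g u (Pi.single i 1)) • fderiv ℝ (fun v => fderiv ℝ g v (Pi.single i 1)) u) u := by
    intro i
    have hi : HasFDerivAt (fun v => fderiv ℝ g v (Pi.single i 1))
        (fderiv ℝ (fun v => fderiv ℝ g v (Pi.single i 1)) u) u :=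
      (((contDiff_Dg hg i).differentiable (by simp)) u).hasFDerivAt
    simpa [pow_two] using hi.fun_mul hi
  exact HasFDerivAt.fun_sum (fun i _ => h i)

lemma integ_help (hsupp : HasCompactSupport g) (φ : (Fin n → ℝ) → ℝ) (hφ : Continuous φ)
    (h0 : ∀ u, u ∉ tsupport g → φ u = 0) : Integrable φ (volume : Measure (Fin n → ℝ)) :=
  hφ.integrable_of_hasCompactSupport
    (hsupp.mono' (fun u hu => by by_contra h; exact hu (h0 u h)))

lemma H_eq_zero (i k : Fin n) (u : Fin n → ℝ) (hu : u ∉ tsupport g) :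
    fderiv ℝ (fun v => fderiv ℝ g v (Pi.single i 1)) u (Pi.single k 1) = 0 := by
  have : u ∉ tsupport (fun v => fderiv ℝ g v (Pi.single i 1)) := fun h => hu (tsupp_Dg i h)
  rw [fderiv_of_notMem_tsupport (𝕜 := ℝ) this]; rfl

lemma Dg_eq_zero (i : Fin n) (u : Fin n → ℝ) (hu : u ∉ tsupport g) :
    fderiv ℝ g u (Pi.single i 1) = 0 := by
  rw [fderiv_of_notMem_tsupport (𝕜 := ℝ) hu]; rfl

lemma contDiff_B (hg : ContDiff ℝ (⊤ : ℕ∞) g) :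
    ContDiff ℝ (⊤ : ℕ∞) (fun u => ∑ i, (fderiv ℝ g u (Pi.single i 1)) ^ 2) :=
  ContDiff.sum fun i _ => (contDiff_Dg hg i).pow 2

lemma fderiv_B_apply (hg : ContDiff ℝ (⊤ : ℕ∞) g) (u : Fin n → ℝ) (k : Fin n) :
    fderiv ℝ (fun u => ∑ i, (fderiv ℝ g u (Pi.single i 1)) ^ 2) u (Pi.single k 1)
      = ∑ i, 2 * (fderiv ℝ g u (Pi.single i 1)) *
          (fderiv ℝ (fun v => fderiv ℝ g v (Pi.single i 1)) u (Pi.single k 1)) := by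
  rw [(hasFDerivAt_B hg u).fderiv]
  simp only [ContinuousLinearMap.coe_sum', Finset.sum_apply, ContinuousLinearMap.add_apply,
    ContinuousLinearMap.smul_apply, smul_eq_mul]
  exact Finset.sum_congr rfl fun i _ => by ring

lemma ibp (hg : ContDiff ℝ (⊤ : ℕ∞) g) (hsupp : HasCompactSupport g) (k : Fin n) :
    ∫ u : Fin n → ℝ, (c k * u k)^2 * ((∑ i, (fderiv ℝ g u (Pi.single i 1))^2) * rho c u)
      = (c k * ∫ u : Fin n → ℝ, (∑ i, (fderiv ℝ g u (Pi.single i 1))^2) * rho c u)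
        + ∫ u : Fin n → ℝ, (c k * u k) * (∑ i, 2 * fderiv ℝ g u (Pi.single i 1) *
            fderiv ℝ (fun v => fderiv ℝ g v (Pi.single i 1)) u (Pi.single k 1)) * rho c u := by
  set B : (Fin n → ℝ) → ℝ := fun u => ∑ i, (fderiv ℝ g u (Pi.single i 1))^2 with hBdef
  set S : (Fin n → ℝ) → ℝ := fun u => ∑ i, 2 * fderiv ℝ g u (Pi.single i 1) *
      fderiv ℝ (fun v => fderiv ℝ g v (Pi.single i 1)) u (Pi.single k 1) with hSdef
  set hk : (Fin n → ℝ) → ℝ := fun u => (c k * u k) * B u with hkdef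
  have hBc : Continuous B := (contDiff_B hg).continuous
  have hSc : Continuous S := by
    apply continuous_finset_sum
    intro i _
    exact (continuous_const.mul (contDiff_Dg hg i).continuous).mul
      (contDiff_Dg (g := fun v => fderiv ℝ g v (Pi.single i 1)) (contDiff_Dg hg i) k).continuous
  have hρc : Continuous (rho c) := (contDiff_rho c).continuous
  have hkc : Continuous hk := (continuous_const.mul (continuous_apply k)).mul hBc
  have hB0 : ∀ u, u ∉ tsupport g → B u = 0 := fun u hu =>
    Finset.sum_eq_zero fun i _ => by rw [Dg_eq_zero i u hu]; ring
  have hS0 : ∀ u, u ∉ tsupport g → S u = 0 := fun u hu =>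
    Finset.sum_eq_zero fun i _ => by rw [Dg_eq_zero i u hu]; ring
  have hρdiff : Differentiable ℝ (rho c) := (contDiff_rho c).differentiable (by simp)
  have hBdiff : Differentiable ℝ B := (contDiff_B hg).differentiable (by simp)
  have hLk : ∀ u : Fin n → ℝ, HasFDerivAt (fun u : Fin n → ℝ => c k * u k)
      ((c k) • ContinuousLinearMap.proj (R := ℝ) (φ := fun _ : Fin n => ℝ) k) u := fun u =>
    ((ContinuousLinearMap.proj (R := ℝ) (φ := fun _ : Fin n => ℝ) k).hasFDerivAt).const_mul (c k)
  have hkdiff : Differentiable ℝ hk := fun u => (((hLk u).mul (hBdiff u).hasFDerivAt)).differentiableAt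
  have hfk : ∀ u : Fin n → ℝ, fderiv ℝ hk u (Pi.single k 1)
      = c k * B u + (c k * u k) * S u := by
    intro u
    have h1 := (hLk u).fun_mul (hBdiff u).hasFDerivAt
    rw [h1.fderiv]
    simp only [ContinuousLinearMap.add_apply, ContinuousLinearMap.smul_apply,
      ContinuousLinearMap.proj_apply, smul_eq_mul, Pi.single_eq_same, mul_one]
    rw [fderiv_B_apply hg u k]
    ring
  have e1 : (fun u : Fin n → ℝ => fderiv ℝ (rho c) u (Pi.single k 1) * hk u)
      = fun u => (-(c k * u k) * rho c u) * ((c k * u k) * B u) :=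
    funext fun u => by rw [fderiv_rho_apply]
  have e2 : (fun u : Fin n → ℝ => rho c u * fderiv ℝ hk u (Pi.single k 1))
      = fun u => rho c u * (c k * B u + (c k * u k) * S u) :=
    funext fun u => by rw [hfk]
  have If'g : Integrable (fun u : Fin n → ℝ => fderiv ℝ (rho c) u (Pi.single k 1) * hk u) := by
    rw [e1]
    exact integ_help hsupp _ (((continuous_const.mul (continuous_apply k)).neg.mul hρc).mul
      ((continuous_const.mul (continuous_apply k)).mul hBc))
      (fun u hu => by rw [hB0 u hu]; ring)
  have Ifg' : Integrable (fun u : Fin n → ℝ => rho c u * fderiv ℝ hk u (Pi.single k 1)) := by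
    rw [e2]
    exact integ_help hsupp _ (hρc.mul ((continuous_const.mul hBc).add
      ((continuous_const.mul (continuous_apply k)).mul hSc)))
      (fun u hu => by rw [hB0 u hu, hS0 u hu]; ring)
  have Ifg : Integrable (fun u : Fin n → ℝ => rho c u * hk u) :=
    integ_help hsupp _ (hρc.mul hkc) (fun u hu => by simp only [hkdef]; rw [hB0 u hu]; ring)
  have h := integral_mul_fderiv_eq_neg_fderiv_mul_of_integrable If'g Ifg' Ifg (fun x _ => hρdiff x) (fun x _ => hkdiff x)
  rw [e1, e2] at h
  have e3 : (fun u : Fin n → ℝ => (-(c k * u k) * rho c u) * ((c k * u k) * B u))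
      = fun u => -((c k * u k)^2 * (B u * rho c u)) := funext fun u => by ring
  have e4 : (fun u : Fin n → ℝ => rho c u * (c k * B u + (c k * u k) * S u))
      = fun u => c k * (B u * rho c u) + (c k * u k) * S u * rho c u := funext fun u => by ring
  rw [e3, integral_neg, neg_neg, e4] at h
  have IB : Integrable (fun u : Fin n → ℝ => B u * rho c u) :=
    integ_help hsupp _ (hBc.mul hρc) (fun u hu => by rw [hB0 u hu]; ring)
  have IS : Integrable (fun u : Fin n → ℝ => (c k * u k) * S u * rho c u) :=
    integ_help hsupp _ (((continuous_const.mul (continuous_apply k)).mul hSc).mul hρc)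
      (fun u hu => by rw [hS0 u hu]; ring)
  rw [integral_add (IB.const_mul (c k)) IS, integral_const_mul (c k) _] at h
  exact h.symm

lemma main_vol (hg : ContDiff ℝ (⊤ : ℕ∞) g) (hsupp : HasCompactSupport g) :
    ∫ u : Fin n → ℝ,
        ((∑ k, (c k * u k) ^ 2) * (∑ i, (fderiv ℝ g u (Pi.single i 1)) ^ 2)) * rho c u
      ≤ (2 * (∑ k, c k) *
          ∫ u : Fin n → ℝ, (∑ i, (fderiv ℝ g u (Pi.single i 1)) ^ 2) * rho c u)
        + 4 * ∫ u : Fin n → ℝ, (∑ i, ∑ j,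
            (fderiv ℝ (fun v => fderiv ℝ g v (Pi.single i 1)) u (Pi.single j 1)) ^ 2) * rho c u := by
  set B : (Fin n → ℝ) → ℝ := fun u => ∑ i, (fderiv ℝ g u (Pi.single i 1))^2 with hBdef
  set H : Fin n → Fin n → (Fin n → ℝ) → ℝ := fun i k u =>
    fderiv ℝ (fun v => fderiv ℝ g v (Pi.single i 1)) u (Pi.single k 1) with hHdef
  set S : Fin n → (Fin n → ℝ) → ℝ := fun k u =>
    ∑ i, 2 * fderiv ℝ g u (Pi.single i 1) * H i k u with hSdef
  have hBc : Continuous B := (contDiff_B hg).continuous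
  have hρc : Continuous (rho c) := (contDiff_rho c).continuous
  have hρ0 : ∀ u, 0 ≤ rho c u := fun u => (rho_pos c u).le
  have hHc : ∀ i k, Continuous (H i k) := fun i k =>
    (contDiff_Dg (g := fun v => fderiv ℝ g v (Pi.single i 1)) (contDiff_Dg hg i) k).continuous
  have hSc : ∀ k, Continuous (S k) := fun k => continuous_finset_sum _ fun i _ =>
    (continuous_const.mul (contDiff_Dg hg i).continuous).mul (hHc i k)
  have hB0 : ∀ u, u ∉ tsupport g → B u = 0 := fun u hu =>
    Finset.sum_eq_zero fun i _ => by rw [Dg_eq_zero i u hu]; ring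
  have hH0 : ∀ i k u, u ∉ tsupport g → H i k u = 0 := fun i k u hu => H_eq_zero i k u hu
  have hS0 : ∀ k u, u ∉ tsupport g → S k u = 0 := fun k u hu =>
    Finset.sum_eq_zero fun i _ => by rw [Dg_eq_zero i u hu]; ring
  have IB : Integrable (fun u : Fin n → ℝ => B u * rho c u) :=
    integ_help hsupp _ (hBc.mul hρc) (fun u hu => by rw [hB0 u hu]; ring)
  have ITk : ∀ k, Integrable (fun u : Fin n → ℝ => (c k * u k)^2 * (B u * rho c u)) := fun k =>
    integ_help hsupp _ (((continuous_const.mul (continuous_apply k)).pow 2).mul (hBc.mul hρc))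
      (fun u hu => by rw [hB0 u hu]; ring)
  have IHk : ∀ k, Integrable (fun u : Fin n → ℝ => (∑ i, H i k u ^ 2) * rho c u) := fun k =>
    integ_help hsupp _ ((continuous_finset_sum _ fun i _ => (hHc i k).pow 2).mul hρc)
      (fun u hu => by
        rw [Finset.sum_eq_zero fun i _ => by rw [hH0 i k u hu]; ring]; ring)
  have ISk : ∀ k, Integrable (fun u : Fin n → ℝ => (c k * u k) * S k u * rho c u) := fun k =>
    integ_help hsupp _ (((continuous_const.mul (continuous_apply k)).mul (hSc k)).mul hρc)
      (fun u hu => by rw [hS0 k u hu]; ring)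
  -- rewrite the LHS as a finite sum of integrals
  have eL : (fun u : Fin n → ℝ => ((∑ k, (c k * u k) ^ 2) * B u) * rho c u)
      = fun u => ∑ k, (c k * u k)^2 * (B u * rho c u) := by
    funext u
    rw [Finset.sum_mul, Finset.sum_mul]
    exact Finset.sum_congr rfl fun k _ => by ring
  rw [eL, integral_finset_sum Finset.univ (fun k _ => ITk k)]
  -- apply integration by parts in each summand
  rw [Finset.sum_congr rfl fun k (_ : k ∈ Finset.univ) => ibp c hg hsupp k]
  rw [Finset.sum_add_distrib, ← Finset.sum_mul]
  -- bound each error term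
  have hJ : ∀ k, (∫ u : Fin n → ℝ, (c k * u k) * S k u * rho c u)
      ≤ (1/2) * (∫ u : Fin n → ℝ, (c k * u k)^2 * (B u * rho c u))
        + 2 * (∫ u : Fin n → ℝ, (∑ i, H i k u ^ 2) * rho c u) := by
    intro k
    have hpt : ∀ u : Fin n → ℝ, (c k * u k) * S k u * rho c u
        ≤ (1/2) * ((c k * u k)^2 * (B u * rho c u)) + 2 * ((∑ i, H i k u ^ 2) * rho c u) := by
      intro u
      have h1 : (c k * u k) * S k u ≤ (1/2) * ((c k * u k)^2 * B u) + 2 * (∑ i, H i k u ^ 2) := by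
        have : (c k * u k) * S k u = ∑ i, (c k * u k) *
            (2 * fderiv ℝ g u (Pi.single i 1) * H i k u) := by
          rw [hSdef]; rw [Finset.mul_sum]
        rw [this, hBdef]
        calc ∑ i, (c k * u k) * (2 * fderiv ℝ g u (Pi.single i 1) * H i k u)
            ≤ ∑ i, ((1/2) * ((c k * u k)^2 * (fderiv ℝ g u (Pi.single i 1))^2)
                + 2 * H i k u ^ 2) := by
              apply Finset.sum_le_sum
              intro i _
              nlinarith [sq_nonneg ((c k * u k) * fderiv ℝ g u (Pi.single i 1) - 2 * H i k u),
                sq_nonneg (c k * u k), sq_nonneg (H i k u)]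
          _ = (1/2) * ((c k * u k)^2 * ∑ i, (fderiv ℝ g u (Pi.single i 1))^2)
                + 2 * (∑ i, H i k u ^ 2) := by
              simp [Finset.sum_add_distrib, ← Finset.mul_sum]
      calc (c k * u k) * S k u * rho c u
          ≤ ((1/2) * ((c k * u k)^2 * B u) + 2 * (∑ i, H i k u ^ 2)) * rho c u :=
            mul_le_mul_of_nonneg_right h1 (hρ0 u)
        _ = (1/2) * ((c k * u k)^2 * (B u * rho c u)) + 2 * ((∑ i, H i k u ^ 2) * rho c u) := by
            ring
    have := integral_mono (ISk k)
      ((((ITk k).const_mul (1/2)).add ((IHk k).const_mul 2))) hpt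
    simp only [Pi.add_apply] at this
    rwa [integral_add ((ITk k).const_mul (1/2)) ((IHk k).const_mul 2),
      integral_const_mul (1/2) _, integral_const_mul 2 _] at this
  have hsumJ : ∑ k, (∫ u : Fin n → ℝ, (c k * u k) * S k u * rho c u)
      ≤ (1/2) * (∑ k, ∫ u : Fin n → ℝ, (c k * u k)^2 * (B u * rho c u))
        + 2 * (∑ k, ∫ u : Fin n → ℝ, (∑ i, H i k u ^ 2) * rho c u) := by
    calc ∑ k, (∫ u : Fin n → ℝ, (c k * u k) * S k u * rho c u)
        ≤ ∑ k, ((1/2) * (∫ u : Fin n → ℝ, (c k * u k)^2 * (B u * rho c u))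
            + 2 * (∫ u : Fin n → ℝ, (∑ i, H i k u ^ 2) * rho c u)) :=
          Finset.sum_le_sum fun k _ => hJ k
      _ = _ := by rw [Finset.sum_add_distrib, ← Finset.mul_sum, ← Finset.mul_sum]
  -- identify the sum of Hessian integrals
  have eC : ∑ k, ∫ u : Fin n → ℝ, (∑ i, H i k u ^ 2) * rho c u
      = ∫ u : Fin n → ℝ, (∑ i, ∑ j, H i j u ^ 2) * rho c u := by
    rw [← integral_finset_sum Finset.univ (fun k _ => IHk k)]
    congr 1
    funext u
    rw [← Finset.sum_mul]
    rw [Finset.sum_comm]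
  rw [eC] at hsumJ
  set L := ∑ k, ∫ u : Fin n → ℝ, (c k * u k)^2 * (B u * rho c u) with hL
  rw [Finset.sum_congr rfl fun k (_ : k ∈ Finset.univ) => ibp c hg hsupp k,
    Finset.sum_add_distrib, ← Finset.sum_mul] at hL
  linarith [hsumJ, hL]


lemma integral_gauss (f : (Fin n → ℝ) → ℝ) :
    ∫ u, f u ∂gaussMeasure c
      = ((∫⁻ u, ENNReal.ofReal (Real.exp (-Phi c u)))⁻¹).toReal *
        ∫ u, f u * rho c u := by
  rw [gaussMeasure, integral_smul_measure]
  congr 1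
  rw [show (fun u : Fin n → ℝ => ENNReal.ofReal (Real.exp (-Phi c u)))
      = (fun u => ((Real.toNNReal (rho c u)) : ENNReal)) from rfl]
  have hm : Measurable (fun u : Fin n → ℝ => (rho c u).toNNReal) :=
    (continuous_real_toNNReal.comp (contDiff_rho c).continuous).measurable
  rw [integral_withDensity_eq_integral_smul hm f]
  congr 1
  funext u
  rw [NNReal.smul_def, Real.coe_toNNReal _ (show (0:ℝ) ≤ rho c u from (Real.exp_pos _).le)]
  exact (mul_comm _ _)

end Aux

/-- For compactly supported smooth `g`,
`∫ |∇Φ|² |∇g|² dμ ≤ 2 (∑ c_k) ∫ |∇g|² dμ + 4 ∫ ‖∇²g‖_F² dμ`. -/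
theorem stmt1 {n : ℕ} (c : Fin n → ℝ) (hc : ∀ k, 0 ≤ c k)
    (g : (Fin n → ℝ) → ℝ) (hg : ContDiff ℝ (⊤ : ℕ∞) g) (hsupp : HasCompactSupport g) :
    ∫ u, (∑ k, (c k * u k) ^ 2) * (∑ i, (fderiv ℝ g u (Pi.single i 1)) ^ 2)
        ∂gaussMeasure c
      ≤ 2 * (∑ k, c k) *
          ∫ u, ∑ i, (fderiv ℝ g u (Pi.single i 1)) ^ 2 ∂gaussMeasure c
        + 4 * ∫ u, ∑ i, ∑ j,
            (fderiv ℝ (fun v => fderiv ℝ g v (Pi.single i 1)) u (Pi.single j 1)) ^ 2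
            ∂gaussMeasure c := by
  rw [integral_gauss c (fun u => (∑ k, (c k * u k) ^ 2) *
        (∑ i, (fderiv ℝ g u (Pi.single i 1)) ^ 2)),
    integral_gauss c (fun u => ∑ i, (fderiv ℝ g u (Pi.single i 1)) ^ 2),
    integral_gauss c (fun u => ∑ i, ∑ j,
        (fderiv ℝ (fun v => fderiv ℝ g v (Pi.single i 1)) u (Pi.single j 1)) ^ 2)]
  set r := ((∫⁻ u, ENNReal.ofReal (Real.exp (-Phi c u)))⁻¹).toReal with hr
  have hr0 : 0 ≤ r := ENNReal.toReal_nonneg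
  have h := main_vol c hg hsupp
  nlinarith [mul_le_mul_of_nonneg_left h hr0]
end

section
/- Let e: M → ℝⁿ have orthonormal components in L²(M,ν) with Δ_M e_k = λ_k e_k, λ_k < 0. Then for any f smooth on ℝⁿ × M with suitable integrability and g ∈ C_c^∞(ℝⁿ): ∫∫ ∑_k e_k(x) ∂_{u_k}g(u) Δ_M f(u,x) μ̂(du dx) ≤ (1/√(ν(M))) (∫ ∑_k |λ_k| (∂_{u_k}g)² dμ)^{1/2} ‖∇_M f‖_{L²(μ̂)}, where μ̂ = μ ⊗ ν/ν(M). -/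
open Real MeasureTheory

set_option maxHeartbeats 800000

private lemma my_cs {α : Type*} [MeasurableSpace α] (μ : Measure α)
    {F G : α → ℝ} (hFn : ∀ x, 0 ≤ F x) (hGn : ∀ x, 0 ≤ G x)
    (hF : AEStronglyMeasurable F μ) (hG : AEStronglyMeasurable G μ)
    (hF2 : Integrable (fun x => F x ^ 2) μ) (hG2 : Integrable (fun x => G x ^ 2) μ) :
    ∫ x, F x * G x ∂μ ≤ Real.sqrt (∫ x, F x ^ 2 ∂μ) * Real.sqrt (∫ x, G x ^ 2 ∂μ) := by
  have hpq : Real.HolderConjugate 2 2 := Real.HolderConjugate.two_two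
  have h2 : (ENNReal.ofReal (2:ℝ)) = 2 := by norm_num
  have hFm : MemLp F (ENNReal.ofReal (2:ℝ)) μ := by
    rw [h2]; exact (memLp_two_iff_integrable_sq hF).2 hF2
  have hGm : MemLp G (ENNReal.ofReal (2:ℝ)) μ := by
    rw [h2]; exact (memLp_two_iff_integrable_sq hG).2 hG2
  have key := MeasureTheory.integral_mul_le_Lp_mul_Lq_of_nonneg hpq
    (ae_of_all _ hFn) (ae_of_all _ hGn) hFm hGm
  have hr : ∀ x : ℝ, x ^ (2:ℝ) = x ^ 2 := fun x => by
    rw [show (2:ℝ) = ((2:ℕ):ℝ) by norm_num, Real.rpow_natCast]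
  simp_rw [hr] at key
  calc ∫ x, F x * G x ∂μ ≤ (∫ x, F x ^ 2 ∂μ) ^ (1/(2:ℝ)) * (∫ x, G x ^ 2 ∂μ) ^ (1/(2:ℝ)) := key
    _ = _ := by rw [← Real.sqrt_eq_rpow, ← Real.sqrt_eq_rpow]

private lemma my_cs_interval {T : ℝ} (hT : 0 ≤ T) {P Q : ℝ → ℝ}
    (hP : Continuous P) (hQ : Continuous Q) :
    -∫ x in (0:ℝ)..T, P x * Q x ≤
      Real.sqrt (∫ x in (0:ℝ)..T, P x ^ 2) * Real.sqrt (∫ x in (0:ℝ)..T, Q x ^ 2) := by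
  have h1 : -∫ x in (0:ℝ)..T, P x * Q x = ∫ x in (0:ℝ)..T, -(P x * Q x) := by
    rw [intervalIntegral.integral_neg]
  have h2 : ∫ x in (0:ℝ)..T, -(P x * Q x) ≤ ∫ x in (0:ℝ)..T, |P x| * |Q x| := by
    apply intervalIntegral.integral_mono_on hT
      ((hP.fun_mul hQ).fun_neg.intervalIntegrable 0 T)
      ((hP.abs.fun_mul hQ.abs).intervalIntegrable 0 T)
    intro x _
    rw [← abs_mul]
    exact neg_le_abs _
  have h3 : ∫ x in (0:ℝ)..T, |P x| * |Q x| ≤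
      Real.sqrt (∫ x in (0:ℝ)..T, |P x| ^ 2) * Real.sqrt (∫ x in (0:ℝ)..T, |Q x| ^ 2) := by
    rw [intervalIntegral.integral_of_le hT, intervalIntegral.integral_of_le hT,
      intervalIntegral.integral_of_le hT]
    exact my_cs (volume.restrict (Set.Ioc 0 T))
      (fun x => abs_nonneg _) (fun x => abs_nonneg _)
      hP.abs.aestronglyMeasurable.restrict hQ.abs.aestronglyMeasurable.restrict
      ((hP.abs.pow 2).integrableOn_Ioc) ((hQ.abs.pow 2).integrableOn_Ioc)
  simp only [sq_abs] at h3
  rw [h1]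
  exact h2.trans h3

private lemma my_ibp {T : ℝ} {p q : ℝ → ℝ} (hp : ContDiff ℝ (⊤:ℕ∞) p) (hq : ContDiff ℝ (⊤:ℕ∞) q)
    (hpT : p T = p 0) (hqT : q T = q 0) :
    ∫ x in (0:ℝ)..T, p x * deriv q x = -∫ x in (0:ℝ)..T, deriv p x * q x := by
  have key := intervalIntegral.integral_mul_deriv_eq_deriv_mul
    (u := p) (v := q) (u' := deriv p) (v' := deriv q) (a := (0:ℝ)) (b := T)
    (fun x _ => (hp.differentiable (by simp) x).hasDerivAt)
    (fun x _ => (hq.differentiable (by simp) x).hasDerivAt)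
    (((hp.continuous_deriv (by simp))).intervalIntegrable 0 T)
    (((hq.continuous_deriv (by simp))).intervalIntegrable 0 T)
  rw [key, hpT, hqT]; ring

private lemma my_per_deriv {q : ℝ → ℝ} {T : ℝ} (h : Function.Periodic q T) :
    deriv q T = deriv q 0 := by
  have he : (fun y => q (y + T)) = q := funext h
  have := deriv_comp_add_const (f := q) (a := T) (x := (0:ℝ))
  rw [he, zero_add] at this
  exact this.symm

/-- On the circle of circumference `2πL` with orthonormal Laplace eigenfunctions `e_k`
(eigenvalues `λ_k < 0`), for `g ∈ C_c^∞(ℝⁿ)` and smooth periodic `f`: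
`∫∫ ∑_k e_k(x) ∂_{u_k}g(u) Δ_M f(u,x) dμ̂
  ≤ (1/√ν(M)) (∫ ∑_k |λ_k| (∂_{u_k}g)² dμ)^{1/2} ‖∇_M f‖_{L²(μ̂)}`,
where `μ̂ = μ ⊗ ν/ν(M)` and `ν(M) = 2πL`. -/
theorem stmt19 (L : ℝ) (hL : 0 < L) (n : ℕ) (e : Fin n → ℝ → ℝ)
    (he : ∀ k, ContDiff ℝ (⊤ : ℕ∞) (e k))
    (hper : ∀ k, Function.Periodic (e k) (2 * π * L))
    (lam : Fin n → ℝ) (hlam : ∀ k, lam k < 0)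
    (heig : ∀ k, deriv (deriv (e k)) = fun x => lam k * e k x)
    (horth : ∀ j k, (∫ x in (0:ℝ)..(2 * π * L), e j x * e k x) = if j = k then 1 else 0)
    (μ : Measure (Fin n → ℝ)) [IsProbabilityMeasure μ]
    (g : (Fin n → ℝ) → ℝ) (hg : ContDiff ℝ (⊤ : ℕ∞) g) (hgsupp : HasCompactSupport g)
    (f : (Fin n → ℝ) → ℝ → ℝ)
    (hf : ContDiff ℝ (⊤ : ℕ∞) (fun p : (Fin n → ℝ) × ℝ => f p.1 p.2))
    (hfper : ∀ u, Function.Periodic (f u) (2 * π * L))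
    (hint1 : Integrable (fun u =>
      (∫ x in (0:ℝ)..(2 * π * L),
        (∑ k, e k x * fderiv ℝ g u (Pi.single k 1)) * deriv (deriv (f u)) x)
        / (2 * π * L)) μ)
    (hint2 : Integrable (fun u =>
      (∫ x in (0:ℝ)..(2 * π * L), (deriv (f u) x) ^ 2) / (2 * π * L)) μ) :
    ∫ u, (∫ x in (0:ℝ)..(2 * π * L),
          (∑ k, e k x * fderiv ℝ g u (Pi.single k 1)) * deriv (deriv (f u)) x)
          / (2 * π * L) ∂μ
      ≤ (1 / Real.sqrt (2 * π * L)) *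
          Real.sqrt (∫ u, ∑ k, |lam k| * (fderiv ℝ g u (Pi.single k 1)) ^ 2 ∂μ) *
          Real.sqrt (∫ u,
            (∫ x in (0:ℝ)..(2 * π * L), (deriv (f u) x) ^ 2) / (2 * π * L) ∂μ) := by
  set T : ℝ := 2 * π * L with hTdef
  have hT0 : 0 < T := by positivity
  have hsT : (0:ℝ) < Real.sqrt T := Real.sqrt_pos.2 hT0
  set c : (Fin n → ℝ) → Fin n → ℝ := fun u k => fderiv ℝ g u (Pi.single k 1) with hc
  set S : (Fin n → ℝ) → ℝ := fun u => ∑ k, |lam k| * (c u k) ^ 2 with hS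
  set B : (Fin n → ℝ) → ℝ := fun u => (∫ x in (0:ℝ)..T, (deriv (f u) x) ^ 2) / T with hB
  set A : (Fin n → ℝ) → ℝ := fun u =>
    ∫ x in (0:ℝ)..T, (∑ k, e k x * c u k) * deriv (deriv (f u)) x with hA
  have hSnn : ∀ u, 0 ≤ S u := fun u =>
    Finset.sum_nonneg fun k _ => mul_nonneg (abs_nonneg _) (sq_nonneg _)
  have hBnn : ∀ u, 0 ≤ B u := fun u =>
    div_nonneg (intervalIntegral.integral_nonneg hT0.le fun x _ => sq_nonneg _) hT0.le
  -- smoothness of f u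
  have he' : ∀ k, ContDiff ℝ (⊤:ℕ∞) (e k) := fun k => (he k).of_le (by simp)
  have hfu : ∀ u, ContDiff ℝ (⊤:ℕ∞) (f u) := fun u => by
    have : ContDiff ℝ (⊤:ℕ∞) (fun x : ℝ => f u x) :=
      (hf.of_le (m := ((⊤:ℕ∞) : WithTop ℕ∞)) (by simp)).comp (f := fun x : ℝ => (u, x)) (ContDiff.prodMk (contDiff_const (c := u)) contDiff_id)
    exact this
  have hd : ∀ k, ContDiff ℝ (⊤:ℕ∞) (deriv (e k)) := fun k =>
    (contDiff_infty_iff_deriv.mp (he' k)).2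
  have heT : ∀ k, e k T = e k 0 := fun k => by simpa using hper k 0
  have hdT : ∀ k, deriv (e k) T = deriv (e k) 0 := fun k => my_per_deriv (hper k)
  -- key: ∫ deriv (e j) * deriv (e k) = if j = k then |lam k| else 0
  have hkey : ∀ j k, (∫ x in (0:ℝ)..T, deriv (e j) x * deriv (e k) x)
      = if j = k then |lam k| else 0 := by
    intro j k
    have h1 := my_ibp (T := T) (he' j) (hd k) (heT j) (hdT k)
    rw [heig k] at h1
    have h2 : (∫ x in (0:ℝ)..T, e j x * (lam k * e k x))
        = lam k * ∫ x in (0:ℝ)..T, e j x * e k x := by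
      rw [← intervalIntegral.integral_const_mul]
      congr 1; ext x; ring
    rw [h2, horth j k] at h1
    have := h1.symm
    rw [neg_eq_iff_eq_neg] at this
    rw [this]
    rcases eq_or_ne j k with rfl | hne
    · simp [abs_of_neg (hlam j)]
    · simp [hne]
  -- pointwise inequality in u
  have hpoint : ∀ u, A u / T ≤ (1 / Real.sqrt T) * (Real.sqrt (S u) * Real.sqrt (B u)) := by
    intro u
    set p : ℝ → ℝ := fun x => ∑ k, e k x * c u k with hpdef
    have hp : ContDiff ℝ (⊤:ℕ∞) p :=
      ContDiff.sum fun k _ => (he' k).mul contDiff_const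
    have hpT : p T = p 0 := by simp [hpdef, heT]
    set q : ℝ → ℝ := deriv (f u) with hq
    have hqC : ContDiff ℝ (⊤:ℕ∞) q := (contDiff_infty_iff_deriv.mp (hfu u)).2
    have hqT : q T = q 0 := my_per_deriv (hfper u)
    have hderiv_p : deriv p = fun x => ∑ k, deriv (e k) x * c u k := by
      funext x
      exact (HasDerivAt.fun_sum fun k _ =>
        ((he' k).differentiable (by simp) x).hasDerivAt.mul_const (c u k)).deriv
    have step1 : A u = -∫ x in (0:ℝ)..T, deriv p x * q x := my_ibp hp hqC hpT hqT
    have hpc : Continuous (deriv p) := hp.continuous_deriv (by simp)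
    have step2 : -(∫ x in (0:ℝ)..T, deriv p x * q x) ≤
        Real.sqrt (∫ x in (0:ℝ)..T, (deriv p x) ^ 2) *
        Real.sqrt (∫ x in (0:ℝ)..T, q x ^ 2) :=
      my_cs_interval hT0.le hpc (hqC.continuous)
    have step3 : (∫ x in (0:ℝ)..T, (deriv p x) ^ 2) = S u := by
      rw [hderiv_p]
      have expand : ∀ x : ℝ, (∑ k, deriv (e k) x * c u k) ^ 2
          = ∑ j, ∑ k, (c u j * c u k) * (deriv (e j) x * deriv (e k) x) := by
        intro x
        rw [sq, Finset.sum_mul_sum]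
        exact Finset.sum_congr rfl fun j _ => Finset.sum_congr rfl fun k _ => by ring
      simp_rw [expand]
      rw [intervalIntegral.integral_finset_sum (fun j _ =>
        (Continuous.intervalIntegrable (continuous_finset_sum _ fun k _ =>
          continuous_const.fun_mul (((hd j).continuous).fun_mul ((hd k).continuous))) 0 T))]
      have : ∀ j, (∫ x in (0:ℝ)..T, ∑ k, (c u j * c u k) * (deriv (e j) x * deriv (e k) x))
          = ∑ k, (c u j * c u k) * (if j = k then |lam k| else 0) := by
        intro j
        rw [intervalIntegral.integral_finset_sum (fun k _ =>
          (Continuous.intervalIntegrable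
            (continuous_const.fun_mul (((hd j).continuous).fun_mul ((hd k).continuous))) 0 T))]
        exact Finset.sum_congr rfl fun k _ => by
          rw [intervalIntegral.integral_const_mul, hkey j k]
      simp_rw [this]
      simp only [mul_ite, mul_zero, Finset.sum_ite_eq, Finset.mem_univ, if_true]
      exact Finset.sum_congr rfl fun k _ => by ring
    have hq2nn : 0 ≤ ∫ x in (0:ℝ)..T, q x ^ 2 :=
      intervalIntegral.integral_nonneg hT0.le fun x _ => sq_nonneg _
    have hsqB : Real.sqrt (B u) = Real.sqrt (∫ x in (0:ℝ)..T, q x ^ 2) / Real.sqrt T := by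
      rw [hB, ← Real.sqrt_div hq2nn]
    have step4 : A u ≤ Real.sqrt (S u) * Real.sqrt (∫ x in (0:ℝ)..T, q x ^ 2) := by
      rw [step1, ← step3]
      exact step2
    calc A u / T ≤ (Real.sqrt (S u) * Real.sqrt (∫ x in (0:ℝ)..T, q x ^ 2)) / T :=
          (div_le_div_iff_of_pos_right hT0).2 step4
      _ = (1 / Real.sqrt T) * (Real.sqrt (S u) * Real.sqrt (B u)) := by
          rw [hsqB]
          have : T = Real.sqrt T * Real.sqrt T := (Real.mul_self_sqrt hT0.le).symm
          field_simp
          rw [Real.sq_sqrt hT0.le]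
  -- global part
  have hc_cont : ∀ k, Continuous fun u => c u k := fun k =>
    ((ContinuousLinearMap.apply ℝ ℝ (Pi.single k 1 : Fin n → ℝ)).continuous).comp
      (hg.continuous_fderiv (by simp))
  have hS_cont : Continuous S := continuous_finset_sum _ fun k _ =>
    continuous_const.mul ((hc_cont k).pow 2)
  have hS_cs : HasCompactSupport S := by
    have h1 : HasCompactSupport (fderiv ℝ g) := hgsupp.fderiv ℝ
    have h2 : S = (fun (w : (Fin n → ℝ) →L[ℝ] ℝ) =>
        ∑ k, |lam k| * (w (Pi.single k 1)) ^ 2) ∘ (fderiv ℝ g) := by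
      funext u; simp [hS, hc, Function.comp]
    rw [h2]
    exact h1.comp_left (by simp)
  obtain ⟨C, hC⟩ := hS_cont.bounded_above_of_compact_support hS_cs
  have hSC : ∀ u, S u ≤ C := fun u => (le_abs_self _).trans (by simpa using hC u)
  have hSint : Integrable S μ :=
    Integrable.mono' (integrable_const C) hS_cont.aestronglyMeasurable (ae_of_all _ hC)
  have hint2' : Integrable B μ := by simp only [hB, hTdef]; exact hint2
  have hint1' : Integrable (fun u => A u / T) μ := by
    simp only [hA, hc, hTdef]; exact hint1
  have hBm : AEStronglyMeasurable B μ := hint2'.1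
  have hsqrtB_m : AEStronglyMeasurable (fun u => Real.sqrt (B u)) μ :=
    Real.continuous_sqrt.comp_aestronglyMeasurable hBm
  have hsqrtB_int : Integrable (fun u => Real.sqrt (B u)) μ := by
    refine Integrable.mono' ((integrable_const 1).add hint2') hsqrtB_m
      (ae_of_all _ fun u => ?_)
    rw [Real.norm_eq_abs, abs_of_nonneg (Real.sqrt_nonneg _), Pi.add_apply]
    nlinarith [Real.sq_sqrt (hBnn u), Real.sqrt_nonneg (B u), sq_nonneg (Real.sqrt (B u) - 1)]
  have hFG_int : Integrable (fun u => Real.sqrt (S u) * Real.sqrt (B u)) μ := by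
    refine Integrable.mono' (hsqrtB_int.const_mul (Real.sqrt C))
      ((Real.continuous_sqrt.comp hS_cont).aestronglyMeasurable.mul hsqrtB_m)
      (ae_of_all _ fun u => ?_)
    rw [Real.norm_eq_abs, abs_of_nonneg
      (mul_nonneg (Real.sqrt_nonneg _) (Real.sqrt_nonneg _))]
    exact mul_le_mul_of_nonneg_right (Real.sqrt_le_sqrt (hSC u)) (Real.sqrt_nonneg _)
  have hS2int : Integrable (fun u => Real.sqrt (S u) ^ 2) μ :=
    hSint.congr (ae_of_all _ fun u => (Real.sq_sqrt (hSnn u)).symm)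
  have hB2int : Integrable (fun u => Real.sqrt (B u) ^ 2) μ :=
    hint2'.congr (ae_of_all _ fun u => (Real.sq_sqrt (hBnn u)).symm)
  have hfinal : ∫ u, A u / T ∂μ ≤
      (1 / Real.sqrt T) * Real.sqrt (∫ u, S u ∂μ) * Real.sqrt (∫ u, B u ∂μ) := by
    calc ∫ u, A u / T ∂μ
        ≤ ∫ u, (1 / Real.sqrt T) * (Real.sqrt (S u) * Real.sqrt (B u)) ∂μ :=
          integral_mono hint1' (hFG_int.const_mul _) hpoint
      _ = (1 / Real.sqrt T) * ∫ u, Real.sqrt (S u) * Real.sqrt (B u) ∂μ :=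
          integral_const_mul _ _
      _ ≤ (1 / Real.sqrt T) * (Real.sqrt (∫ u, S u ∂μ) * Real.sqrt (∫ u, B u ∂μ)) := by
          refine mul_le_mul_of_nonneg_left ?_ (by positivity)
          have hcs := my_cs μ (F := fun u => Real.sqrt (S u)) (G := fun u => Real.sqrt (B u))
            (fun u => Real.sqrt_nonneg _) (fun u => Real.sqrt_nonneg _)
            (Real.continuous_sqrt.comp hS_cont).aestronglyMeasurable hsqrtB_m hS2int hB2int
          have e1 : ∫ u, Real.sqrt (S u) ^ 2 ∂μ = ∫ u, S u ∂μ :=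
            integral_congr_ae (ae_of_all _ fun u => Real.sq_sqrt (hSnn u))
          have e2 : ∫ u, Real.sqrt (B u) ^ 2 ∂μ = ∫ u, B u ∂μ :=
            integral_congr_ae (ae_of_all _ fun u => Real.sq_sqrt (hBnn u))
          rw [e1, e2] at hcs
          exact hcs
      _ = (1 / Real.sqrt T) * Real.sqrt (∫ u, S u ∂μ) * Real.sqrt (∫ u, B u ∂μ) := by
          ring
  simpa only [hA, hS, hB, hc, hTdef] using hfinal
end
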